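/- Let d = ξ(π) with ξ'(t) = sin²t/√(1+sin²t), ξ(0)=0, and define g(t) = (sin³t + 4d)·ξ(t) − 4d². Then g is strictly increasing on (0,π) and g(π) = 0; hence g(t) < 0 for t ∈ [0,π). -/

import Mathlib

/-!
Since `ξ` is nondecreasing with `ξ 0 = 0`, we have `0 ≤ ξ t ≤ d` on `[0, π]`. Differentiating,
`g' = sin²t · (3 cos t · ξ t · √(1 + sin²t) + sin³t + 4d) / √(1 + sin²t)`, and
`(cos t · √(1 + sin²t))² = 1 - sin⁴t ≤ 1` bounds the first summand in the bracket below by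
`-3d`, so `g' > 0` on `(0, π)`. Finally `g π = 4d · ξ π - 4d² = 0`.
-/

open Real

/-- The function ξ, antiderivative of sin²t/√(1+sin²t) vanishing at 0. -/
noncomputable def xi (t : ℝ) : ℝ := ∫ r in (0:ℝ)..t, Real.sin r ^ 2 / Real.sqrt (1 + Real.sin r ^ 2)

lemma continuous_xi_integrand :
    Continuous fun r => Real.sin r ^ 2 / Real.sqrt (1 + Real.sin r ^ 2) :=
  (continuous_sin.pow 2).div (continuous_const.add (continuous_sin.pow 2)).sqrt fun r =>
    (Real.sqrt_pos.2 (by positivity)).ne'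

lemma hasDerivAt_xi (t : ℝ) :
    HasDerivAt xi (Real.sin t ^ 2 / Real.sqrt (1 + Real.sin t ^ 2)) t :=
  (continuous_xi_integrand.integral_hasStrictDerivAt 0 t).hasDerivAt

lemma xi_zero : xi 0 = 0 :=
  intervalIntegral.integral_same

lemma monotone_xi : Monotone xi :=
  monotone_of_hasDerivAt_nonneg hasDerivAt_xi fun _ => by positivity

lemma xi_nonneg {t : ℝ} (ht : 0 ≤ t) : 0 ≤ xi t :=
  xi_zero ▸ monotone_xi ht

lemma neg_one_le_cos_mul_sqrt_one_add_sin_sq (t : ℝ) :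
    -1 ≤ Real.cos t * Real.sqrt (1 + Real.sin t ^ 2) := by
  have hsq : (Real.cos t * Real.sqrt (1 + Real.sin t ^ 2)) ^ 2 = 1 - Real.sin t ^ 4 := by
    rw [mul_pow, Real.sq_sqrt (by positivity), Real.cos_sq']
    ring
  nlinarith [sq_nonneg (Real.sin t ^ 2)]

lemma hasDerivAt_sin_pow_three_add_mul_xi (c t : ℝ) :
    HasDerivAt (fun t => (Real.sin t ^ 3 + c) * xi t)
      (3 * Real.sin t ^ 2 * Real.cos t * xi t
        + (Real.sin t ^ 3 + c) * (Real.sin t ^ 2 / Real.sqrt (1 + Real.sin t ^ 2))) t := by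
  have hsin : HasDerivAt (fun t => Real.sin t ^ 3 + c) (3 * Real.sin t ^ 2 * Real.cos t) t := by
    simpa using ((Real.hasDerivAt_sin t).pow 3).add_const c
  exact hsin.mul (hasDerivAt_xi t)

lemma sin_pow_three_add_mul_deriv_pos {t x d : ℝ} (hsin : 0 < Real.sin t) (hx : 0 ≤ x) (hxd : x ≤ d) :
    0 < 3 * Real.sin t ^ 2 * Real.cos t * x
      + (Real.sin t ^ 3 + 4 * d) * (Real.sin t ^ 2 / Real.sqrt (1 + Real.sin t ^ 2)) := by
  set s := Real.sqrt (1 + Real.sin t ^ 2)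
  have hs : 0 < s := Real.sqrt_pos.2 (by positivity)
  have hcs := neg_one_le_cos_mul_sqrt_one_add_sin_sq t
  have hbracket : 0 < 3 * Real.cos t * x * s + Real.sin t ^ 3 + 4 * d := by
    nlinarith [pow_pos hsin 3]
  have heq : 3 * Real.sin t ^ 2 * Real.cos t * x + (Real.sin t ^ 3 + 4 * d) * (Real.sin t ^ 2 / s)
      = Real.sin t ^ 2 * ((3 * Real.cos t * x * s + Real.sin t ^ 3 + 4 * d) / s) := by
    field_simp
    ring
  rw [heq]
  positivity

theorem stmt_11 (d : ℝ) (hd : d = xi π) (g : ℝ → ℝ)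
    (hg : ∀ t, g t = (Real.sin t ^ 3 + 4 * d) * xi t - 4 * d ^ 2) :
    StrictMonoOn g (Set.Ioo 0 π) ∧ g π = 0 ∧ ∀ t ∈ Set.Ico 0 π, g t < 0 := by
  have hderiv : ∀ t, HasDerivAt g _ t := fun t => by
    rw [funext hg]
    exact (hasDerivAt_sin_pow_three_add_mul_xi (4 * d) t).sub_const (4 * d ^ 2)
  have hmono : StrictMonoOn g (Set.Icc 0 π) := by
    refine strictMonoOn_of_hasDerivWithinAt_pos (convex_Icc 0 π)
      (fun t _ => (hderiv t).continuousAt.continuousWithinAt)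
      (fun t _ => (hderiv t).hasDerivWithinAt) fun t ht => ?_
    rw [interior_Icc] at ht
    exact sin_pow_three_add_mul_deriv_pos (Real.sin_pos_of_pos_of_lt_pi ht.1 ht.2) (xi_nonneg ht.1.le)
      (hd ▸ monotone_xi ht.2.le)
  have hgpi : g π = 0 := by
    rw [hg, Real.sin_pi, hd]
    ring
  refine ⟨hmono.mono Set.Ioo_subset_Icc_self, hgpi, fun t ht => hgpi ▸ ?_⟩
  exact hmono (Set.Ico_subset_Icc_self ht) ⟨pi_pos.le, le_rfl⟩ ht.2
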